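/- Let k > 0 and χ > 0. There exists ε₀ > 0 (for instance ε₀ = min(1/2, k/(4χ))) such that for every ε ∈ (0, ε₀) the regularized free energy ψ_ε(r) = ψ_{e,ε}(r) + ψ_{e,ε}(1−r) + χ r(1−r) satisfies growth conditions of type (eq. (27)) with exponent p = 2: there exist constants M₁, M₂, M₃, M₄, M₅ > 0 (depending on ε) such that, for every r ∈ ℝ, −M₁ + M₂ r² ≤ ψ_ε(r) ≤ M₃ + M₄ r² and |ψ_ε'(r)| ≤ M₅ (1 + |r|). -/

import Mathlib

/-! Below `ε` the regularization is a parabola of curvature `k / ε`, and AM-GM absorbs its linear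
term `k r log ε`, so `ψ_{e,ε}(r) ≥ k r² / (4ε) - C` there; above `ε` one has `r - 1 ≤ r log r ≤ r²`.
Outside `[0, 1]` one of `r`, `1 - r` is negative, so the entropic part of `ψ_ε` is at least
`k r² / (8ε) - C`, which beats the concave enthalpy `-χ r²` once `ε < k / (16χ)`.
Both branches of `ψ_{e,ε}'` equal `k (log ε + 1)` at `ε`, and `|log r| ≤ |log ε| + |r|` for
`r ≥ ε` gives the linear bound on the derivative. -/

/-- Elliott–Luckhaus regularization of the entropic contribution `k r log r`. -/
noncomputable def psiEeps (k ε r : ℝ) : ℝ :=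
  if ε ≤ r then k * r * Real.log r
  else k * r * Real.log ε + k / 2 * (r ^ 2 / ε - ε)

/-- Regularized regular-solution free energy. -/
noncomputable def psiEps (k χ ε r : ℝ) : ℝ :=
  psiEeps k ε r + psiEeps k ε (1 - r) + χ * r * (1 - r)

open Real Set Filter

theorem hasDerivAt_ite_le {f g f' g' : ℝ → ℝ} {a x : ℝ}
    (hf : ∀ y, a ≤ y → HasDerivAt f (f' y) y) (hg : ∀ y, y ≤ a → HasDerivAt g (g' y) y)
    (hfg : f a = g a) (hfg' : f' a = g' a) :
    HasDerivAt (fun y => if a ≤ y then f y else g y) (if a ≤ x then f' x else g' x) x := by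
  rcases lt_trichotomy x a with hxa | rfl | hax
  · rw [if_neg hxa.not_ge]
    refine (hg x hxa.le).congr_of_eventuallyEq ?_
    filter_upwards [Iio_mem_nhds hxa] with y hy
    rw [if_neg (not_le.mpr hy)]
  · rw [if_pos le_rfl]
    have hright : HasDerivWithinAt (fun y => if x ≤ y then f y else g y) (f' x) (Ici x) x :=
      (hf x le_rfl).hasDerivWithinAt.congr (fun y hy => if_pos hy) (if_pos le_rfl)
    have hleft : HasDerivWithinAt (fun y => if x ≤ y then f y else g y) (f' x) (Iic x) x := by
      rw [hfg']
      refine (hg x le_rfl).hasDerivWithinAt.congr (fun y hy => ?_) (by rw [if_pos le_rfl, hfg])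
      rcases (mem_Iic.mp hy).lt_or_eq with hy | rfl
      · exact if_neg (not_le.mpr hy)
      · rw [if_pos le_rfl, hfg]
    simpa only [Iic_union_Ici, hasDerivWithinAt_univ] using hleft.union hright
  · rw [if_pos hax.le]
    refine (hf x hax.le).congr_of_eventuallyEq ?_
    filter_upwards [Ioi_mem_nhds hax] with y hy
    rw [if_pos hy.le]

section

variable {k χ ε : ℝ}

noncomputable def psiEepsDeriv (k ε r : ℝ) : ℝ :=
  if ε ≤ r then k * (log r + 1) else k * log ε + k * r / ε

theorem hasDerivAt_psiEeps (hε : 0 < ε) (r : ℝ) :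
    HasDerivAt (psiEeps k ε) (psiEepsDeriv k ε r) r := by
  refine hasDerivAt_ite_le (f := fun y => k * y * log y)
    (g := fun y => k * y * log ε + k / 2 * (y ^ 2 / ε - ε)) (f' := fun y => k * (log y + 1))
    (g' := fun y => k * log ε + k * y / ε) (fun y hy => ?_) (fun y _ => ?_) ?_ ?_
  · simpa only [mul_assoc] using (hasDerivAt_mul_log (hε.trans_le hy).ne').const_mul k
  · refine ((((hasDerivAt_id' y).const_mul k).mul_const (log ε)).add
      ((((hasDerivAt_pow 2 y).div_const ε).sub_const ε).const_mul (k / 2))).congr_deriv ?_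
    field_simp
    norm_num
    ring
  · simp [sq, hε.ne']
  · field_simp

theorem hasDerivAt_psiEps (hε : 0 < ε) (r : ℝ) :
    HasDerivAt (psiEps k χ ε)
      (psiEepsDeriv k ε r - psiEepsDeriv k ε (1 - r) + χ * (1 - 2 * r)) r := by
  have hreflect : HasDerivAt (fun y : ℝ => 1 - y) (-1) r := by
    simpa using (hasDerivAt_id r).const_sub 1
  have henthalpy : HasDerivAt (fun y => χ * y * (1 - y)) (χ * (1 - r) + χ * r * (-1)) r :=
    ((hasDerivAt_id' r).const_mul χ).mul hreflect |>.congr_deriv (by ring)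
  refine (((hasDerivAt_psiEeps hε r).add ((hasDerivAt_psiEeps hε (1 - r)).comp r hreflect)).add
    henthalpy).congr_deriv ?_
  ring

theorem abs_psiEepsDeriv_le (hk : 0 ≤ k) (hε : 0 < ε) (r : ℝ) :
    |psiEepsDeriv k ε r| ≤ k * (1 + |log ε| + ε⁻¹) * (1 + |r|) := by
  have hεinv : 0 ≤ ε⁻¹ := inv_nonneg.mpr hε.le
  have hlogε := abs_nonneg (log ε)
  have habsr := abs_nonneg r
  rw [mul_assoc]
  unfold psiEepsDeriv
  split_ifs with h
  · have hr : 0 < r := hε.trans_le h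
    have hlog : |log r| ≤ |log ε| + |r| := abs_le.mpr
      ⟨by linarith [neg_abs_le (log ε), log_le_log hε h],
        by linarith [log_le_self hr.le, le_abs_self r]⟩
    rw [abs_mul, abs_of_nonneg hk]
    gcongr
    calc |log r + 1| ≤ |log r| + 1 := by simpa using abs_add_le (log r) 1
      _ ≤ (1 + |log ε| + ε⁻¹) * (1 + |r|) := by nlinarith [mul_nonneg hlogε habsr]
  · rw [show k * log ε + k * r / ε = k * (log ε + r * ε⁻¹) by ring, abs_mul, abs_of_nonneg hk]
    gcongr
    calc |log ε + r * ε⁻¹| ≤ |log ε| + |r| * ε⁻¹ := by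
          simpa [abs_mul, abs_of_nonneg hεinv] using abs_add_le (log ε) (r * ε⁻¹)
      _ ≤ (1 + |log ε| + ε⁻¹) * (1 + |r|) := by nlinarith [mul_nonneg hlogε habsr]

theorem psiEeps_le (hk : 0 ≤ k) (hε : 0 < ε) (r : ℝ) :
    psiEeps k ε r ≤ k * |log ε| + k * (1 + |log ε| + ε⁻¹) * r ^ 2 := by
  have hlogε := abs_nonneg (log ε)
  unfold psiEeps
  split_ifs with h
  · have hr : 0 < r := hε.trans_le h
    have hrlog : r * log r ≤ r ^ 2 := by
      rw [sq]; exact mul_le_mul_of_nonneg_left (log_le_self hr.le) hr.le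
    nlinarith [mul_nonneg hk (mul_nonneg hlogε (sq_nonneg r)),
      mul_nonneg hk (mul_nonneg (inv_nonneg.mpr hε.le) (sq_nonneg r))]
  · have hlinear : r * log ε ≤ |log ε| * (1 + r ^ 2) := by
      nlinarith [le_abs_self (r * log ε), abs_mul r (log ε), sq_nonneg (|r| - 1), sq_abs r]
    have hparabola : r ^ 2 / ε - ε ≤ 2 * (ε⁻¹ * r ^ 2) := by
      rw [div_eq_inv_mul]; nlinarith [mul_nonneg (inv_nonneg.mpr hε.le) (sq_nonneg r)]
    nlinarith [mul_le_mul_of_nonneg_left hlinear hk, mul_le_mul_of_nonneg_left hparabola hk,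
      mul_nonneg hk (sq_nonneg r)]

theorem psiEeps_ge (hk : 0 ≤ k) (hε : 0 < ε) (r : ℝ) :
    k / (4 * ε) * min r 0 ^ 2 - k * (1 + ε * log ε ^ 2 + ε) ≤ psiEeps k ε r := by
  unfold psiEeps
  split_ifs with h
  · have hr : 0 < r := hε.trans_le h
    have hrlog : r - 1 ≤ r * log r := by
      have := mul_le_mul_of_nonneg_left (one_sub_inv_le_log_of_pos hr) hr.le
      rwa [mul_sub, mul_one, mul_inv_cancel₀ hr.ne'] at this
    rw [min_eq_right hr.le]
    nlinarith [mul_nonneg hk (mul_nonneg hε.le (sq_nonneg (log ε)))]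
  · have hmin : min r 0 ^ 2 ≤ r ^ 2 := by
      rcases le_total r 0 with hr | hr
      · rw [min_eq_left hr]
      · simpa [min_eq_right hr] using sq_nonneg r
    -- AM-GM, `0 ≤ (r + 2 ε log ε)²`, absorbs the linear term into half of the parabola
    have hamgm : -(r ^ 2 / (4 * ε)) - ε * log ε ^ 2 ≤ r * log ε := by
      have hsq : 0 ≤ (r + 2 * ε * log ε) ^ 2 / (4 * ε) := by positivity
      have hexpand : (r + 2 * ε * log ε) ^ 2 / (4 * ε)
          = r ^ 2 / (4 * ε) + r * log ε + ε * log ε ^ 2 := by field_simp; ring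
      linarith
    have hparabola : k / 2 * (r ^ 2 / ε - ε) = 2 * (k * (r ^ 2 / (4 * ε))) - k * ε / 2 := by
      field_simp; ring
    have hkmin : k / (4 * ε) * min r 0 ^ 2 ≤ k * (r ^ 2 / (4 * ε)) := by
      rw [div_mul_eq_mul_div, mul_div_assoc]; gcongr
    nlinarith [mul_le_mul_of_nonneg_left hamgm hk, mul_nonneg hk hε.le]

theorem sq_le_two_mul_min_sq_add_min_sq_add_two (r : ℝ) :
    r ^ 2 ≤ 2 * (min r 0 ^ 2 + min (1 - r) 0 ^ 2) + 2 := by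
  rcases le_total r 0 with hr | hr <;> rcases le_total (1 - r) 0 with hr' | hr' <;>
    simp only [min_eq_left, min_eq_right, hr, hr'] <;> nlinarith [sq_nonneg (r - 2)]

theorem psiEps_ge (hk : 0 ≤ k) (hχ : 0 ≤ χ) (hε : 0 < ε) (r : ℝ) :
    -(2 * k * (1 + ε * log ε ^ 2 + ε) + k / (4 * ε) + χ) + (k / (8 * ε) - 2 * χ) * r ^ 2
      ≤ psiEps k χ ε r := by
  have hentropy := add_le_add (psiEeps_ge hk hε r) (psiEeps_ge hk hε (1 - r))
  have hmin := mul_le_mul_of_nonneg_left (sq_le_two_mul_min_sq_add_min_sq_add_two r)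
    (by positivity : 0 ≤ k / (8 * ε))
  have hcoeff : k / (8 * ε) * 2 = k / (4 * ε) := by field_simp; ring
  have henthalpy : -(χ + 2 * χ * r ^ 2) ≤ χ * r * (1 - r) := by
    nlinarith [mul_nonneg hχ (sq_nonneg (2 * r + 1))]
  unfold psiEps
  nlinarith

theorem psiEps_le (hk : 0 ≤ k) (hχ : 0 ≤ χ) (hε : 0 < ε) (r : ℝ) :
    psiEps k χ ε r ≤ 2 * k * |log ε| + 2 * (k * (1 + |log ε| + ε⁻¹)) + χ
      + 3 * (k * (1 + |log ε| + ε⁻¹)) * r ^ 2 := by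
  have hB : 0 ≤ k * (1 + |log ε| + ε⁻¹) := by positivity
  have hsq := mul_le_mul_of_nonneg_left (show (1 - r) ^ 2 ≤ 2 + 2 * r ^ 2 by
    nlinarith [sq_nonneg (1 + r)]) hB
  have henthalpy : χ * r * (1 - r) ≤ χ := by nlinarith [mul_nonneg hχ (sq_nonneg (2 * r - 1))]
  unfold psiEps
  nlinarith [psiEeps_le hk hε r, psiEeps_le hk hε (1 - r)]

theorem abs_deriv_psiEps_le (hk : 0 ≤ k) (hχ : 0 ≤ χ) (hε : 0 < ε) (r : ℝ) :
    |deriv (psiEps k χ ε) r| ≤ (3 * (k * (1 + |log ε| + ε⁻¹)) + 2 * χ) * (1 + |r|) := by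
  have hB : 0 ≤ k * (1 + |log ε| + ε⁻¹) := by positivity
  have hreflect : |1 - r| ≤ 1 + |r| := by simpa using abs_sub (1 : ℝ) r
  have henthalpy : |χ * (1 - 2 * r)| ≤ 2 * χ * (1 + |r|) := by
    rw [abs_mul, abs_of_nonneg hχ]
    have habs : |1 - 2 * r| ≤ 1 + 2 * |r| := by
      simpa [abs_mul] using abs_sub (1 : ℝ) (2 * r)
    nlinarith [abs_nonneg r]
  rw [(hasDerivAt_psiEps hε r).deriv]
  calc _ ≤ |psiEepsDeriv k ε r| + |psiEepsDeriv k ε (1 - r)| + |χ * (1 - 2 * r)| :=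
        (abs_add_le _ _).trans (add_le_add_left (abs_sub _ _) _)
    _ ≤ _ := by
      nlinarith [abs_psiEepsDeriv_le hk hε r, abs_psiEepsDeriv_le hk hε (1 - r),
        mul_le_mul_of_nonneg_left hreflect hB, mul_nonneg hB (abs_nonneg r)]

end

/-- For small enough `ε`, the regularized regular-solution free energy satisfies the
polynomial growth conditions with exponent `p = 2`. -/
theorem regularized_free_energy_quadratic_growth
    (k χ : ℝ) (hk : 0 < k) (hχ : 0 < χ) :
    ∃ ε₀ > (0 : ℝ), ∀ ε : ℝ, 0 < ε → ε < ε₀ →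
      ∃ M₁ M₂ M₃ M₄ M₅ : ℝ,
        0 < M₁ ∧ 0 < M₂ ∧ 0 < M₃ ∧ 0 < M₄ ∧ 0 < M₅ ∧
        ∀ r : ℝ,
          (-M₁ + M₂ * r ^ 2 ≤ psiEps k χ ε r) ∧
          (psiEps k χ ε r ≤ M₃ + M₄ * r ^ 2) ∧
          |deriv (psiEps k χ ε) r| ≤ M₅ * (1 + |r|) := by
  refine ⟨k / (16 * χ), by positivity, fun ε hε hεχ => ?_⟩
  have hM₂ : 0 < k / (8 * ε) - 2 * χ := by
    rw [lt_div_iff₀ (by positivity)] at hεχ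
    rw [sub_pos, lt_div_iff₀ (by positivity)]
    linarith
  refine ⟨2 * k * (1 + ε * log ε ^ 2 + ε) + k / (4 * ε) + χ, k / (8 * ε) - 2 * χ,
    2 * k * |log ε| + 2 * (k * (1 + |log ε| + ε⁻¹)) + χ, 3 * (k * (1 + |log ε| + ε⁻¹)),
    3 * (k * (1 + |log ε| + ε⁻¹)) + 2 * χ, by positivity, hM₂, by positivity, by positivity,
    by positivity, fun r => ⟨psiEps_ge hk.le hχ.le hε r, psiEps_le hk.le hχ.le hε r,
      abs_deriv_psiEps_le hk.le hχ.le hε r⟩⟩
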